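/- Let a and b be unit vectors in a complex Hilbert space H and let A be the rank-one operator A x = ⟨x, a⟩ b. Then A*A − AA* = P_a − P_b, where P_a x = ⟨x,a⟩a and P_b x = ⟨x,b⟩b, and consequently ‖A*A − AA*‖ = √(1 − |⟨a, b⟩|²). -/

import Mathlib

/-!
With `A = rankOne b a`, the rank-one calculus gives `A* = rankOne a b`, hence `A*A = P_a` and
`AA* = P_b`. For `T = P_a − P_b` and `s = 1 − |⟨a,b⟩|²` one computes `T³ = s T`. Since `T` is
self-adjoint, the C⋆-identity applied to `T²` (which satisfies `T² T² = s T²`) gives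
`‖T‖² = ‖T²‖ ≤ s`, and the vector `T a = a − ⟨b,a⟩ b`, of squared norm `s`, gives `‖T‖² ≥ s`.
-/

open ContinuousLinearMap

theorem IsSelfAdjoint.norm_le_of_mul_self_eq_smul {𝕜 A : Type*} [NormedField 𝕜]
    [NonUnitalNormedRing A] [StarRing A] [CStarRing A] [NormedSpace 𝕜 A]
    {y : A} (hy : IsSelfAdjoint y) {c : 𝕜} (h : y * y = c • y) : ‖y‖ ≤ ‖c‖ := by
  have key : ‖y‖ ^ 2 = ‖c‖ * ‖y‖ := by rw [← hy.norm_mul_self, h, norm_smul]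
  nlinarith [norm_nonneg y, norm_nonneg c]

section

variable {𝕜 E : Type*} [RCLike 𝕜] [NormedAddCommGroup E] [InnerProductSpace 𝕜 E]

theorem norm_sub_inner_smul_sq {b : E} (hb : ‖b‖ = 1) (a : E) :
    ‖a - inner 𝕜 b a • b‖ ^ 2 = ‖a‖ ^ 2 - ‖inner 𝕜 b a‖ ^ 2 := by
  rw [@norm_sub_sq 𝕜, norm_smul, hb, inner_smul_right, ← inner_conj_symm a b, RCLike.mul_conj]
  norm_cast
  ring

namespace InnerProductSpace

theorem rankOne_sub_rankOne_mul_self_mul_self {a b : E} (ha : ‖a‖ = 1) (hb : ‖b‖ = 1) :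
    (rankOne 𝕜 a a - rankOne 𝕜 b b) * (rankOne 𝕜 a a - rankOne 𝕜 b b) *
      (rankOne 𝕜 a a - rankOne 𝕜 b b) =
      ((1 - ‖inner 𝕜 a b‖ ^ 2 : ℝ) : 𝕜) • (rankOne 𝕜 a a - rankOne 𝕜 b b) := by
  have hc : ((‖inner 𝕜 a b‖ ^ 2 : ℝ) : 𝕜) = inner 𝕜 a b * inner 𝕜 b a := by
    rw [← inner_conj_symm b a, RCLike.mul_conj]
    norm_cast
  simp only [mul_def, sub_comp, comp_sub, smul_comp, rankOne_comp_rankOne,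
    inner_self_eq_norm_sq_to_K, ha, hb, RCLike.ofReal_sub, RCLike.ofReal_one, hc]
  module

variable [CompleteSpace E]

theorem norm_rankOne_sub_rankOne {a b : E} (ha : ‖a‖ = 1) (hb : ‖b‖ = 1) :
    ‖rankOne 𝕜 a a - rankOne 𝕜 b b‖ = √(1 - ‖inner 𝕜 a b‖ ^ 2) := by
  set T := rankOne 𝕜 a a - rankOne 𝕜 b b
  set s := 1 - ‖inner 𝕜 a b‖ ^ 2
  have hTa : ‖T a‖ ^ 2 = s := by
    have : T a = a - inner 𝕜 b a • b := by simp [T, ha]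
    rw [this, norm_sub_inner_smul_sq hb, ha, norm_inner_symm, one_pow]
  have hs : 0 ≤ s := hTa ▸ sq_nonneg _
  have hT : IsSelfAdjoint T :=
    (isStarProjection_rankOne_self ha).isSelfAdjoint.sub
      (isStarProjection_rankOne_self hb).isSelfAdjoint
  have hTT : IsSelfAdjoint (T * T) := by
    simpa only [hT.star_eq] using IsSelfAdjoint.star_mul_self T
  have upper : ‖T‖ ^ 2 ≤ s := by
    rw [← hT.norm_mul_self, ← RCLike.norm_of_nonneg (K := 𝕜) hs]
    refine hTT.norm_le_of_mul_self_eq_smul ?_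
    rw [← mul_assoc, rankOne_sub_rankOne_mul_self_mul_self ha hb, smul_mul_assoc]
  have lower : s ≤ ‖T‖ ^ 2 := by
    rw [← hTa]
    gcongr
    simpa [ha] using T.le_opNorm a
  rw [← Real.sqrt_sq (norm_nonneg T), le_antisymm upper lower]

noncomputable def _root_.ContinuousLinearMap.selfCommutator (A : E →L[𝕜] E) : E →L[𝕜] E :=
  adjoint A ∘L A - A ∘L adjoint A

theorem selfCommutator_rankOne {a b : E} (ha : ‖a‖ = 1) (hb : ‖b‖ = 1) :
    selfCommutator (rankOne 𝕜 b a) = rankOne 𝕜 a a - rankOne 𝕜 b b := by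
  simp [selfCommutator, rankOne_comp_rankOne, inner_self_eq_norm_sq_to_K, ha, hb]

end InnerProductSpace

end

/-- For unit vectors `a, b` and the rank-one operator `A x = ⟨x,a⟩b`, the self-commutator of
`A` equals `P_a − P_b`, and its norm is `√(1 − |⟨a,b⟩|²)`. -/
theorem selfCommutator_rank_one
    {H : Type*} [NormedAddCommGroup H] [InnerProductSpace ℂ H] [CompleteSpace H]
    (a b : H) (ha : ‖a‖ = 1) (hb : ‖b‖ = 1)
    (A : H →L[ℂ] H) (hA : ∀ x : H, A x = (inner ℂ a x : ℂ) • b) :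
    adjoint A ∘L A - A ∘L adjoint A
        = (innerSL ℂ a).smulRight a - (innerSL ℂ b).smulRight b ∧
    ‖adjoint A ∘L A - A ∘L adjoint A‖ = Real.sqrt (1 - ‖(inner ℂ a b : ℂ)‖ ^ 2) := by
  have hA' : A = InnerProductSpace.rankOne ℂ b a := ext hA
  have hC : adjoint A ∘L A - A ∘L adjoint A =
      InnerProductSpace.rankOne ℂ a a - InnerProductSpace.rankOne ℂ b b := by
    rw [hA']
    exact InnerProductSpace.selfCommutator_rankOne ha hb
  refine ⟨hC, ?_⟩
  rw [hC]
  exact InnerProductSpace.norm_rankOne_sub_rankOne ha hb
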